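/- Fix q ∈ (0,1) and λ > 0, with check loss ρ_q and asymmetric penalty J₂ as above. The effective loss ρ_q^γ(r) := min_γ { ρ_q(r - γ) + (λ/2)J₂(γ) } equals: (q-1)r - q(1-q)/(2λ) for r < -q/λ; (λ/2)·((1-q)/q)·r² for -q/λ ≤ r < 0; (λ/2)·(q/(1-q))·r² for 0 ≤ r < (1-q)/λ; and qr - q(1-q)/(2λ) for r ≥ (1-q)/λ. -/

import Mathlib

/-- The check loss `ρ_q`. -/
noncomputable def checkLoss (q r : ℝ) : ℝ := if 0 ≤ r then q * r else (q - 1) * r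

/-- The asymmetric quadratic penalty `J₂`. -/
noncomputable def asymPenalty (q γ : ℝ) : ℝ :=
  (q / (1 - q)) * (max γ 0)^2 + ((1 - q) / q) * (max (-γ) 0)^2

/-- The effective quantile loss obtained by profiling out `γ`. -/
noncomputable def effCheckLoss (q lam r : ℝ) : ℝ :=
  if r < -q / lam then (q - 1) * r - q * (1 - q) / (2 * lam)
  else if r < 0 then (lam / 2) * ((1 - q) / q) * r^2
  else if r < (1 - q) / lam then (lam / 2) * (q / (1 - q)) * r^2
  else q * r - q * (1 - q) / (2 * lam)

/-!
Convex duality. Since the check loss is `s ↦ max (q s) ((q - 1) s)`, we have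
`ρ_q(r - γ) ≥ τ (r - γ)` for every slope `τ ∈ [q - 1, q]`, and Fenchel–Young for the penalty gives
`(λ/2) J₂(γ) ≥ τ γ - P*(τ)`. Adding, every value of the objective is at least `τ r - P*(τ)`; for
`τ` the clamp of the derivative of the claimed formula this bound is the formula itself. It is
attained at `γ` the projection of `r` onto `[-q/λ, (1-q)/λ]`.
-/

lemma checkLoss_of_nonneg (q : ℝ) {s : ℝ} (hs : 0 ≤ s) : checkLoss q s = q * s := if_pos hs

lemma checkLoss_of_neg (q : ℝ) {s : ℝ} (hs : s < 0) : checkLoss q s = (q - 1) * s :=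
  if_neg hs.not_ge

lemma mul_le_checkLoss {q τ : ℝ} (hτ : τ ∈ Set.Icc (q - 1) q) (s : ℝ) : τ * s ≤ checkLoss q s := by
  obtain ⟨hτ₁, hτ₂⟩ := hτ
  rcases le_or_gt 0 s with hs | hs
  · rw [checkLoss_of_nonneg q hs]
    exact mul_le_mul_of_nonneg_right hτ₂ hs
  · rw [checkLoss_of_neg q hs]
    exact mul_le_mul_of_nonpos_right hτ₁ hs.le

lemma asymPenalty_of_nonneg (q : ℝ) {γ : ℝ} (hγ : 0 ≤ γ) :
    asymPenalty q γ = q / (1 - q) * γ ^ 2 := by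
  simp [asymPenalty, hγ]

lemma asymPenalty_of_nonpos (q : ℝ) {γ : ℝ} (hγ : γ ≤ 0) :
    asymPenalty q γ = (1 - q) / q * γ ^ 2 := by
  simp [asymPenalty, hγ]

lemma mul_le_half_mul_sq_add {a : ℝ} (ha : 0 < a) (τ x : ℝ) :
    τ * x ≤ a / 2 * x ^ 2 + τ ^ 2 / (2 * a) := by
  have key : a / 2 * x ^ 2 + τ ^ 2 / (2 * a) - τ * x = (a * x - τ) ^ 2 / (2 * a) := by
    field_simp
    ring
  have : 0 ≤ (a * x - τ) ^ 2 / (2 * a) := by positivity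
  linarith

/-- The convex conjugate `P*` of `P γ = (λ/2) J₂(γ)`. -/
noncomputable def asymPenaltyConj (q lam τ : ℝ) : ℝ :=
  if 0 ≤ τ then τ ^ 2 / (2 * (lam * (q / (1 - q)))) else τ ^ 2 / (2 * (lam * ((1 - q) / q)))

section

variable {q lam : ℝ} (hq₀ : 0 < q) (hq₁ : q < 1) (hlam : 0 < lam)
include hq₀ hq₁ hlam

lemma mul_le_asymPenalty_add_conj (τ γ : ℝ) :
    τ * γ ≤ lam / 2 * asymPenalty q γ + asymPenaltyConj q lam τ := by
  have hq' : 0 < 1 - q := by linarith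
  have hsplit : lam / 2 * asymPenalty q γ =
      lam * (q / (1 - q)) / 2 * max γ 0 ^ 2 + lam * ((1 - q) / q) / 2 * max (-γ) 0 ^ 2 := by
    rw [asymPenalty]; ring
  rw [hsplit, asymPenaltyConj]
  split_ifs with hτ
  · have hpos : 0 ≤ lam * ((1 - q) / q) / 2 * max (-γ) 0 ^ 2 := by positivity
    have := mul_le_half_mul_sq_add (by positivity : 0 < lam * (q / (1 - q))) τ (max γ 0)
    nlinarith [le_max_left γ 0]
  · have hpos : 0 ≤ lam * (q / (1 - q)) / 2 * max γ 0 ^ 2 := by positivity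
    have := mul_le_half_mul_sq_add (by positivity : 0 < lam * ((1 - q) / q)) (-τ) (max (-γ) 0)
    rw [neg_sq] at this
    nlinarith [le_max_left (-γ) 0]

lemma exists_effCheckLoss_eq_dual (r : ℝ) :
    ∃ τ ∈ Set.Icc (q - 1) q, effCheckLoss q lam r = τ * r - asymPenaltyConj q lam τ := by
  have hq' : 0 < 1 - q := by linarith
  unfold effCheckLoss
  split_ifs with h₁ h₂ h₃
  · refine ⟨q - 1, ⟨le_rfl, by linarith⟩, ?_⟩
    rw [asymPenaltyConj, if_neg (by linarith)]
    field_simp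
    ring
  · have hr₁ : -q ≤ lam * r := by
      have := (div_le_iff₀ hlam).mp (not_lt.mp h₁); linarith
    have hr₂ : lam * r < 0 := mul_neg_of_pos_of_neg hlam h₂
    refine ⟨(1 - q) * (lam * r) / q, ⟨?_, ?_⟩, ?_⟩
    · rw [le_div_iff₀ hq₀]; nlinarith
    · rw [div_le_iff₀ hq₀]; nlinarith
    · rw [asymPenaltyConj, if_neg (div_neg_of_neg_of_pos (by nlinarith) hq₀).not_ge]
      field_simp
      ring
  · have hr₁ : 0 ≤ lam * r := mul_nonneg hlam.le (not_lt.mp h₂)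
    have hr₂ : lam * r < 1 - q := by
      have := (lt_div_iff₀ hlam).mp h₃; linarith
    refine ⟨q * (lam * r) / (1 - q), ⟨?_, ?_⟩, ?_⟩
    · have : 0 ≤ q * (lam * r) / (1 - q) := by positivity
      linarith
    · rw [div_le_iff₀ hq']; nlinarith
    · rw [asymPenaltyConj, if_pos (by positivity)]
      field_simp
      ring
  · refine ⟨q, ⟨by linarith, le_rfl⟩, ?_⟩
    rw [asymPenaltyConj, if_pos hq₀.le]
    field_simp

lemma effCheckLoss_le_objective (r γ : ℝ) :
    effCheckLoss q lam r ≤ checkLoss q (r - γ) + lam / 2 * asymPenalty q γ := by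
  obtain ⟨τ, hτ, hdual⟩ := exists_effCheckLoss_eq_dual hq₀ hq₁ hlam r
  have := mul_le_checkLoss hτ (r - γ)
  have := mul_le_asymPenalty_add_conj hq₀ hq₁ hlam τ γ
  linarith

lemma exists_effCheckLoss_eq_objective (r : ℝ) :
    ∃ γ, effCheckLoss q lam r = checkLoss q (r - γ) + lam / 2 * asymPenalty q γ := by
  have hq' : 0 < 1 - q := by linarith
  unfold effCheckLoss
  split_ifs with h₁ h₂ h₃
  · refine ⟨-q / lam, ?_⟩
    have hγ : -q / lam ≤ 0 := div_nonpos_of_nonpos_of_nonneg (by linarith) hlam.le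
    rw [checkLoss_of_neg q (by linarith), asymPenalty_of_nonpos q hγ]
    field_simp
    ring
  · refine ⟨r, ?_⟩
    rw [sub_self, checkLoss_of_nonneg q le_rfl, asymPenalty_of_nonpos q h₂.le]
    ring
  · refine ⟨r, ?_⟩
    rw [sub_self, checkLoss_of_nonneg q le_rfl, asymPenalty_of_nonneg q (not_lt.mp h₂)]
    ring
  · refine ⟨(1 - q) / lam, ?_⟩
    rw [checkLoss_of_nonneg q (by linarith), asymPenalty_of_nonneg q (by positivity)]
    field_simp
    ring

end

/-- The minimum of `γ ↦ ρ_q(r - γ) + (λ/2)J₂(γ)` equals the effective quantile loss. -/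
theorem quantile_effective_loss (q lam r : ℝ) (hq : q ∈ Set.Ioo (0:ℝ) 1)
    (hlam : 0 < lam) :
    IsLeast {v : ℝ | ∃ γ : ℝ, v = checkLoss q (r - γ) + (lam / 2) * asymPenalty q γ}
      (effCheckLoss q lam r) := by
  obtain ⟨hq₀, hq₁⟩ := hq
  refine ⟨exists_effCheckLoss_eq_objective hq₀ hq₁ hlam r, ?_⟩
  rintro v ⟨γ, rfl⟩
  exact effCheckLoss_le_objective hq₀ hq₁ hlam r γ
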